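/- arXiv:2511.19302 — 2 statements merged into one kernel-verified Lean document; each statement's English description precedes it below -/
import Mathlib

section
/- Suppose p_PR ∈ (0, √2-1], α ≥ 0, η ∈ (2/3, 1], and (3p_PR/2 + α)η² - (p_PR + α)η = E_obs > 0. Then there exists η_ns ∈ (2/3, η] such that (√2-1)·((3/2)η_ns² - η_ns) = E_obs. -/
/-- Proposition 1 (parametrized form): if a behavior with PR weight
`p_PR ∈ (0,√2-1]` and LD parameter `α ≥ 0` yields Eberhard violation
`E_obs > 0` at efficiency `η ∈ (2/3,1]`, then the extremal behavior with
PR weight `√2-1` and `α = 0` achieves the same violation at some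
`η_ns ∈ (2/3, η]`. -/
theorem exists_eta_ns
    (pPR α η Eobs : ℝ)
    (hpPR : 0 < pPR) (hpPR' : pPR ≤ Real.sqrt 2 - 1) (hα : 0 ≤ α)
    (hη : 2 / 3 < η) (hη' : η ≤ 1)
    (heq : (3 * pPR / 2 + α) * η ^ 2 - (pPR + α) * η = Eobs)
    (hE : 0 < Eobs) :
    ∃ ηns : ℝ, 2 / 3 < ηns ∧ ηns ≤ η ∧
      (Real.sqrt 2 - 1) * ((3 / 2) * ηns ^ 2 - ηns) = Eobs := by
  set f : ℝ → ℝ := fun x => (Real.sqrt 2 - 1) * ((3 / 2) * x ^ 2 - x) with hf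
  have hcont : ContinuousOn f (Set.Icc (2/3) η) := by
    apply Continuous.continuousOn; fun_prop
  have hab : (2:ℝ)/3 ≤ η := hη.le
  have hg : 0 < (3 / 2) * η ^ 2 - η := by nlinarith
  have hfb : Eobs ≤ f η := by
    have h1 : α * (η ^ 2 - η) ≤ 0 := by nlinarith [mul_nonneg hα (show (0:ℝ) ≤ η - η^2 by nlinarith)]
    have : Eobs = pPR * ((3/2) * η^2 - η) + α * (η^2 - η) := by ring_nf; linarith [heq]
    simp only [hf]
    nlinarith
  have hfa : f (2/3) = 0 := by simp only [hf]; ring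
  have := intermediate_value_Ioc hab hcont (a := 2/3) (b := η)
  have hmem : Eobs ∈ Set.Ioc (f (2/3)) (f η) := ⟨by rw [hfa]; exact hE, hfb⟩
  obtain ⟨x, hx, hfx⟩ := this hmem
  exact ⟨x, hx.1, hx.2, hfx⟩
end

section
/- Under the combined efficiency-and-dark-count noise channel applied locally to both parties with efficiency η and dark count probability ξ, the Eberhard quantity of the transformed behavior equals K·η² - L·η + M·ξ·η - N·ξ + O·ξ², where K = P(++|x0y0) - P(++|x1y1) + P(++|x0y1) + P(++|x1y0), L = P(++|x0y1) + P(++|x1y0) + P(+0|x0y1) + P(0+|x1y0), M = P(0+|x0y0) + P(+0|x0y0) + P(0+|x0y1) + P(+0|x1y0) + P(+0|x0y1) + P(0+|x1y0) - P(0+|x1y1) - P(+0|x1y1), N = P(00|x0y1) + P(00|x1y0) + P(0+|x0y1) + P(+0|x1y0), O = P(00|x0y0) + P(00|x0y1) + P(00|x1y0) - P(00|x1y1). -/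
/-- Local noise channel with efficiency `η` and dark count probability `ξ`:
transition probabilities `T out inp` with outcomes indexed `0 = '+'`, `1 = '0'`. -/
def darkT (η ξ : ℝ) : Fin 2 → Fin 2 → ℝ := fun out inp =>
  if inp = 0 then (if out = 0 then η else 1 - η)
  else (if out = 0 then ξ else 1 - ξ)

/-- Eberhard quantity after the combined efficiency/dark-count channel equals
`K·η² - L·η + M·ξ·η - N·ξ + O·ξ²`. -/
theorem eberhard_after_dark_counts
    (P Q : Fin 2 → Fin 2 → Fin 2 → Fin 2 → ℝ)  -- arguments: a b x y
    (η ξ : ℝ) (hη₀ : 0 ≤ η) (hη₁ : η ≤ 1) (hξ₀ : 0 ≤ ξ) (hξ₁ : ξ ≤ 1)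
    (hQ : ∀ a' b' x y, Q a' b' x y
      = ∑ a, ∑ b, darkT η ξ a' a * darkT η ξ b' b * P a b x y) :
    Q 0 0 0 0 - Q 0 1 0 1 - Q 1 0 1 0 - Q 0 0 1 1
      = (P 0 0 0 0 - P 0 0 1 1 + P 0 0 0 1 + P 0 0 1 0) * η ^ 2
        - (P 0 0 0 1 + P 0 0 1 0 + P 0 1 0 1 + P 1 0 1 0) * η
        + (P 1 0 0 0 + P 0 1 0 0 + P 1 0 0 1 + P 0 1 1 0
            + P 0 1 0 1 + P 1 0 1 0 - P 1 0 1 1 - P 0 1 1 1) * ξ * η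
        - (P 1 1 0 1 + P 1 1 1 0 + P 1 0 0 1 + P 0 1 1 0) * ξ
        + (P 1 1 0 0 + P 1 1 0 1 + P 1 1 1 0 - P 1 1 1 1) * ξ ^ 2 := by
  simp only [hQ, Fin.sum_univ_two, darkT]
  norm_num
  ring
end
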